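/- Downlink-to-uplink inclusion with explicit dual powers: for every network decoding order π and every nonpositive power allocation r, define r̄ by r̄_k^{[π_k(l)]} = −α_{kk}^{[π_k(l)]} + β_k^{[π_k(l)]} for all k and l ∈ {1,2}. Then r̄ is nonpositive and P^IBC_π(r) ⊆ P^IMAC_π(r̄); consequently P^IBC⋆ ⊆ P^IMAC⋆. -/
import Mathlib


open Finset

/-- Positive part: `(x)⁺ = max {x, 0}`. -/
noncomputable def pplus (x : ℝ) : ℝ := max x 0

/-- Maximum over all pairs `(l, j)` with `j ≠ k` of `f j l`. -/
noncomputable def crossMax {K : ℕ} (hK : 2 ≤ K) (k : Fin K)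
    (f : Fin K → Fin 2 → ℝ) : ℝ :=
  (Finset.univ.filter (fun p : Fin K × Fin 2 => p.1 ≠ k)).sup'
    (by
      haveI : Nontrivial (Fin K) := Fin.nontrivial_iff_two_le.mpr hK
      obtain ⟨j, hj⟩ := exists_ne k
      exact ⟨(j, (0 : Fin 2)), by simp [hj]⟩)
    (fun p => f p.1 p.2)

/-- Minimum over all pairs `(l, j)` with `j ≠ k` of `f j l`. -/
noncomputable def crossMin {K : ℕ} (hK : 2 ≤ K) (k : Fin K)
    (f : Fin K → Fin 2 → ℝ) : ℝ :=
  (Finset.univ.filter (fun p : Fin K × Fin 2 => p.1 ≠ k)).inf'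
    (by
      haveI : Nontrivial (Fin K) := Fin.nontrivial_iff_two_le.mpr hK
      obtain ⟨j, hj⟩ := exists_ne k
      exact ⟨(j, (0 : Fin 2)), by simp [hj]⟩)
    (fun p => f p.1 p.2)

/-- Maximum over all cells `j ≠ i` of `f j`. -/
noncomputable def cellMax {K : ℕ} (hK : 2 ≤ K) (i : Fin K)
    (f : Fin K → ℝ) : ℝ :=
  (Finset.univ.filter (fun j : Fin K => j ≠ i)).sup'
    (by
      haveI : Nontrivial (Fin K) := Fin.nontrivial_iff_two_le.mpr hK
      obtain ⟨j, hj⟩ := exists_ne i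
      exact ⟨j, by simp [hj]⟩)
    f

/-- IBC TIN upper bound on the GDoF of the first-decoded user of cell `k`.
Users are indexed by `Fin 2` (user `0` is UE 1, user `1` is UE 2);
`π k 0` and `π k 1` are the first and second decoded users of cell `k`. -/
noncomputable def ibcBound1 {K : ℕ} (hK : 2 ≤ K) (α : Fin K → Fin K → Fin 2 → ℝ)
    (π : Fin K → Equiv.Perm (Fin 2)) (r : Fin K → Fin 2 → ℝ) (k : Fin K) : ℝ :=
  max 0 (min
    (α k k (π k 0) + r k (π k 0) -
      pplus (max (α k k (π k 0) + r k (π k 1))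
        (crossMax hK k (fun j l => α k j (π k 0) + r j l))))
    (α k k (π k 1) + r k (π k 0) -
      pplus (max (α k k (π k 1) + r k (π k 1))
        (crossMax hK k (fun j l => α k j (π k 1) + r j l)))))

/-- IBC TIN upper bound on the GDoF of the second-decoded user of cell `k`. -/
noncomputable def ibcBound2 {K : ℕ} (hK : 2 ≤ K) (α : Fin K → Fin K → Fin 2 → ℝ)
    (π : Fin K → Equiv.Perm (Fin 2)) (r : Fin K → Fin 2 → ℝ) (k : Fin K) : ℝ :=
  max 0 (α k k (π k 1) + r k (π k 1) -
    pplus (crossMax hK k (fun j l => α k j (π k 1) + r j l)))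

/-- The IBC TIN region `P^IBC_π(r)`. -/
noncomputable def IBCr {K : ℕ} (hK : 2 ≤ K) (α : Fin K → Fin K → Fin 2 → ℝ)
    (π : Fin K → Equiv.Perm (Fin 2)) (r : Fin K → Fin 2 → ℝ) :
    Set (Fin K → Fin 2 → ℝ) :=
  {d | ∀ k : Fin K,
    (0 ≤ d k (π k 0) ∧ d k (π k 0) ≤ ibcBound1 hK α π r k) ∧
    (0 ≤ d k (π k 1) ∧ d k (π k 1) ≤ ibcBound2 hK α π r k)}

/-- The general TIN-achievable GDoF region of the IBC, `P^IBC⋆`. -/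
noncomputable def IBCstar {K : ℕ} (hK : 2 ≤ K) (α : Fin K → Fin K → Fin 2 → ℝ) :
    Set (Fin K → Fin 2 → ℝ) :=
  {d | ∃ π : Fin K → Equiv.Perm (Fin 2), ∃ r : Fin K → Fin 2 → ℝ,
    (∀ k l, r k l ≤ 0) ∧ d ∈ IBCr hK α π r}

/-- IMAC TIN upper bound on the GDoF of user `π k 0` (decoded last) of cell `k`. -/
noncomputable def imacBound1 {K : ℕ} (hK : 2 ≤ K) (α : Fin K → Fin K → Fin 2 → ℝ)
    (π : Fin K → Equiv.Perm (Fin 2)) (r : Fin K → Fin 2 → ℝ) (k : Fin K) : ℝ :=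
  max 0 (α k k (π k 0) + r k (π k 0) -
    pplus (crossMax hK k (fun j l => α j k l + r j l)))

/-- IMAC TIN upper bound on the GDoF of user `π k 1` of cell `k`. -/
noncomputable def imacBound2 {K : ℕ} (hK : 2 ≤ K) (α : Fin K → Fin K → Fin 2 → ℝ)
    (π : Fin K → Equiv.Perm (Fin 2)) (r : Fin K → Fin 2 → ℝ) (k : Fin K) : ℝ :=
  max 0 (α k k (π k 1) + r k (π k 1) -
    pplus (max (α k k (π k 0) + r k (π k 0))
      (crossMax hK k (fun j l => α j k l + r j l))))

/-- The IMAC TIN region `P^IMAC_π(r̄)`. -/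
noncomputable def IMACr {K : ℕ} (hK : 2 ≤ K) (α : Fin K → Fin K → Fin 2 → ℝ)
    (π : Fin K → Equiv.Perm (Fin 2)) (r : Fin K → Fin 2 → ℝ) :
    Set (Fin K → Fin 2 → ℝ) :=
  {d | ∀ k : Fin K,
    (0 ≤ d k (π k 0) ∧ d k (π k 0) ≤ imacBound1 hK α π r k) ∧
    (0 ≤ d k (π k 1) ∧ d k (π k 1) ≤ imacBound2 hK α π r k)}

/-- The general TIN-achievable GDoF region of the IMAC, `P^IMAC⋆`. -/
noncomputable def IMACstar {K : ℕ} (hK : 2 ≤ K) (α : Fin K → Fin K → Fin 2 → ℝ) :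
    Set (Fin K → Fin 2 → ℝ) :=
  {d | ∃ π : Fin K → Equiv.Perm (Fin 2), ∃ r : Fin K → Fin 2 → ℝ,
    (∀ k l, r k l ≤ 0) ∧ d ∈ IMACr hK α π r}

/-- `betaD hK α π r k l = β_k^{[π_k(l+1)]}`, indexed by decoding position `l : Fin 2`. -/
noncomputable def betaD {K : ℕ} (hK : 2 ≤ K) (α : Fin K → Fin K → Fin 2 → ℝ)
    (π : Fin K → Equiv.Perm (Fin 2)) (r : Fin K → Fin 2 → ℝ)
    (k : Fin K) (l : Fin 2) : ℝ :=
  if l = 0 then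
    min
      (min (min (α k k (π k 0)) (-(r k (π k 1))))
        (α k k (π k 0) - crossMax hK k (fun j l' => α k j (π k 0) + r j l')))
      (min (min (α k k (π k 1)) (-(r k (π k 1))))
        (α k k (π k 1) - crossMax hK k (fun j l' => α k j (π k 1) + r j l')))
  else
    min (α k k (π k 1))
      (α k k (π k 1) - crossMax hK k (fun j l' => α k j (π k 1) + r j l'))

/-- The dual uplink power allocation `r̄_k^{[π_k(l)]} = −α_{kk}^{[π_k(l)]} + β_k^{[π_k(l)]}`,
expressed as a function of the user index `u`. -/
noncomputable def rbarDual {K : ℕ} (hK : 2 ≤ K) (α : Fin K → Fin K → Fin 2 → ℝ)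
    (π : Fin K → Equiv.Perm (Fin 2)) (r : Fin K → Fin 2 → ℝ)
    (k : Fin K) (u : Fin 2) : ℝ :=
  -α k k u + betaD hK α π r k ((π k).symm u)

/-- `gammaD hK α π r k l = γ_k^{[π_k(l+1)]}`, indexed by decoding position `l : Fin 2`. -/
noncomputable def gammaD {K : ℕ} (hK : 2 ≤ K) (α : Fin K → Fin K → Fin 2 → ℝ)
    (π : Fin K → Equiv.Perm (Fin 2)) (r : Fin K → Fin 2 → ℝ)
    (k : Fin K) (l : Fin 2) : ℝ :=
  if l = 0 then
    max 0 (crossMax hK k (fun j l' => α j k l' + r j l'))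
  else
    max (max 0 (α k k (π k 0) + r k (π k 0)))
      (crossMax hK k (fun j l' => α j k l' + r j l'))

/-- `γ_j^{[u]}` indexed by the user index `u`. -/
noncomputable def gammaU {K : ℕ} (hK : 2 ≤ K) (α : Fin K → Fin K → Fin 2 → ℝ)
    (π : Fin K → Equiv.Perm (Fin 2)) (r : Fin K → Fin 2 → ℝ)
    (j : Fin K) (u : Fin 2) : ℝ :=
  gammaD hK α π r j ((π j).symm u)

lemma le_crossMax' {K : ℕ} (hK : 2 ≤ K) {k j : Fin K} (hjk : j ≠ k) (l : Fin 2)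
    (f : Fin K → Fin 2 → ℝ) : f j l ≤ crossMax hK k f := by
  have hmem : (⟨j, l⟩ : Fin K × Fin 2) ∈
      Finset.univ.filter (fun p : Fin K × Fin 2 => p.1 ≠ k) := by simp [hjk]
  exact Finset.le_sup' (fun p : Fin K × Fin 2 => f p.1 p.2) hmem

lemma crossMax_le' {K : ℕ} (hK : 2 ≤ K) {k : Fin K} {c : ℝ} {f : Fin K → Fin 2 → ℝ}
    (h : ∀ j, j ≠ k → ∀ l, f j l ≤ c) : crossMax hK k f ≤ c :=
  Finset.sup'_le _ _ fun p hp => h p.1 (by simpa using hp) p.2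

lemma betaD_zero {K : ℕ} (hK : 2 ≤ K) (α : Fin K → Fin K → Fin 2 → ℝ)
    (π : Fin K → Equiv.Perm (Fin 2)) (r : Fin K → Fin 2 → ℝ) (k : Fin K) :
    betaD hK α π r k 0 =
      min
        (min (min (α k k (π k 0)) (-(r k (π k 1))))
          (α k k (π k 0) - crossMax hK k (fun j l' => α k j (π k 0) + r j l')))
        (min (min (α k k (π k 1)) (-(r k (π k 1))))
          (α k k (π k 1) - crossMax hK k (fun j l' => α k j (π k 1) + r j l'))) := by
  simp [betaD]

lemma betaD_one {K : ℕ} (hK : 2 ≤ K) (α : Fin K → Fin K → Fin 2 → ℝ)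
    (π : Fin K → Equiv.Perm (Fin 2)) (r : Fin K → Fin 2 → ℝ) (k : Fin K) :
    betaD hK α π r k 1 =
      min (α k k (π k 1))
        (α k k (π k 1) - crossMax hK k (fun j l' => α k j (π k 1) + r j l')) := by
  unfold betaD
  norm_num

/-- **Downlink-to-uplink inclusion with explicit dual powers.**
For every decoding order `π` and nonpositive power allocation `r`, the dual
allocation `r̄_k^{[π_k(l)]} = −α_{kk}^{[π_k(l)]} + β_k^{[π_k(l)]}` is nonpositive and
`P^IBC_π(r) ⊆ P^IMAC_π(r̄)`; consequently `P^IBC⋆ ⊆ P^IMAC⋆`. -/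
theorem dl_to_ul_inclusion {K : ℕ} (hK : 2 ≤ K) (α : Fin K → Fin K → Fin 2 → ℝ)
    (hα : ∀ k i l, 0 ≤ α k i l) (hord : ∀ k, α k k 0 ≤ α k k 1) :
    (∀ (π : Fin K → Equiv.Perm (Fin 2)) (r : Fin K → Fin 2 → ℝ),
      (∀ k l, r k l ≤ 0) →
        (∀ k l, rbarDual hK α π r k l ≤ 0) ∧
        IBCr hK α π r ⊆ IMACr hK α π (rbarDual hK α π r)) ∧
    IBCstar hK α ⊆ IMACstar hK α := by
  have main : ∀ (π : Fin K → Equiv.Perm (Fin 2)) (r : Fin K → Fin 2 → ℝ),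
      (∀ k l, r k l ≤ 0) →
        (∀ k l, rbarDual hK α π r k l ≤ 0) ∧
        IBCr hK α π r ⊆ IMACr hK α π (rbarDual hK α π r) := by
    intro π r hr
    -- β is at most the corresponding direct channel strength
    have hbeta_le : ∀ k (m : Fin 2), betaD hK α π r k m ≤ α k k (π k m) := by
      intro k m
      have hm : m = 0 ∨ m = 1 := by omega
      rcases hm with hm | hm <;> subst hm
      · rw [betaD_zero]
        exact le_trans (min_le_left _ _) (le_trans (min_le_left _ _) (min_le_left _ _))
      · rw [betaD_one]
        exact min_le_left _ _
    -- β is at most direct strength minus cross interference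
    have hbetaC : ∀ k (m : Fin 2), betaD hK α π r k m ≤
        α k k (π k m) - crossMax hK k (fun j l' => α k j (π k m) + r j l') := by
      intro k m
      have hm : m = 0 ∨ m = 1 := by omega
      rcases hm with hm | hm <;> subst hm
      · rw [betaD_zero]
        exact le_trans (min_le_left _ _) (min_le_right _ _)
      · rw [betaD_one]
        exact min_le_right _ _
    -- nonpositivity of the dual allocation
    have hrb : ∀ k u, rbarDual hK α π r k u ≤ 0 := by
      intro k u
      have h := hbeta_le k ((π k).symm u)
      rw [Equiv.apply_symm_apply] at h
      simp only [rbarDual]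
      linarith
    -- key identities
    have hA : ∀ k, α k k (π k 0) + rbarDual hK α π r k (π k 0) = betaD hK α π r k 0 := by
      intro k
      simp only [rbarDual, Equiv.symm_apply_apply]
      ring
    have hB : ∀ k, α k k (π k 1) + rbarDual hK α π r k (π k 1) = betaD hK α π r k 1 := by
      intro k
      simp only [rbarDual, Equiv.symm_apply_apply]
      ring
    -- cross-term bound
    have hD : ∀ k j, j ≠ k → ∀ (l' l'' : Fin 2),
        α j k l' + rbarDual hK α π r j l' ≤ -(r k l'') := by
      intro k j hjk l' l''
      have hm := hbetaC j ((π j).symm l')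
      rw [Equiv.apply_symm_apply] at hm
      have h2 : α j k l' + r k l'' ≤
          crossMax hK j (fun i l => α j i l' + r i l) :=
        le_crossMax' hK (Ne.symm hjk) l'' (fun i l => α j i l' + r i l)
      simp only [rbarDual]
      linarith
    have hX : ∀ k (l'' : Fin 2),
        crossMax hK k (fun j l => α j k l + rbarDual hK α π r j l) ≤ -(r k l'') := by
      intro k l''
      exact crossMax_le' hK (fun j hjk l => hD k j hjk l l'')
    have hXp : ∀ k (l'' : Fin 2),
        pplus (crossMax hK k (fun j l => α j k l + rbarDual hK α π r j l)) ≤ -(r k l'') := by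
      intro k l''
      exact max_le (hX k l'') (by linarith [hr k l''])
    have hb0 : ∀ k, betaD hK α π r k 0 ≤ -(r k (π k 1)) := by
      intro k
      rw [betaD_zero]
      exact le_trans (min_le_left _ _) (le_trans (min_le_left _ _) (min_le_right _ _))
    refine ⟨hrb, ?_⟩
    intro d hd k
    obtain ⟨⟨h01, h02⟩, h11, h12⟩ := hd k
    refine ⟨⟨h01, ?_⟩, h11, ?_⟩
    · -- first-decoded user
      refine le_trans h02 ?_
      unfold ibcBound1 imacBound1
      rw [hA k]
      refine max_le (le_max_left _ _) (le_max_of_le_right ?_)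
      rw [betaD_zero]
      set a0 := α k k (π k 0) with ha0
      set a1 := α k k (π k 1) with ha1
      set C0 := crossMax hK k (fun j l' => α k j (π k 0) + r j l') with hC0
      set C1 := crossMax hK k (fun j l' => α k j (π k 1) + r j l') with hC1
      set pX := pplus (crossMax hK k (fun j l => α j k l + rbarDual hK α π r j l)) with hpX
      have hp0 : pX ≤ -(r k (π k 0)) := hXp k (π k 0)
      have e0u : a0 + r k (π k 1) ≤ pplus (max (a0 + r k (π k 1)) C0) :=
        le_trans (le_max_left _ _) (le_max_left _ _)
      have e0c : C0 ≤ pplus (max (a0 + r k (π k 1)) C0) :=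
        le_trans (le_max_right _ _) (le_max_left _ _)
      have e0z : (0 : ℝ) ≤ pplus (max (a0 + r k (π k 1)) C0) := le_max_right _ _
      have e1u : a1 + r k (π k 1) ≤ pplus (max (a1 + r k (π k 1)) C1) :=
        le_trans (le_max_left _ _) (le_max_left _ _)
      have e1c : C1 ≤ pplus (max (a1 + r k (π k 1)) C1) :=
        le_trans (le_max_right _ _) (le_max_left _ _)
      have e1z : (0 : ℝ) ≤ pplus (max (a1 + r k (π k 1)) C1) := le_max_right _ _
      set T0 := a0 + r k (π k 0) - pplus (max (a0 + r k (π k 1)) C0) with hT0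
      set T1 := a1 + r k (π k 0) - pplus (max (a1 + r k (π k 1)) C1) with hT1
      have mT0 : min T0 T1 ≤ T0 := min_le_left _ _
      have mT1 : min T0 T1 ≤ T1 := min_le_right _ _
      rw [le_sub_iff_add_le]
      refine le_min (le_min (le_min ?_ ?_) ?_) (le_min (le_min ?_ ?_) ?_) <;>
        linarith
    · -- second-decoded user
      refine le_trans h12 ?_
      unfold ibcBound2 imacBound2
      rw [hA k, hB k]
      refine max_le (le_max_left _ _) (le_max_of_le_right ?_)
      rw [betaD_one]
      set a1 := α k k (π k 1) with ha1
      set C1 := crossMax hK k (fun j l' => α k j (π k 1) + r j l') with hC1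
      set X := crossMax hK k (fun j l => α j k l + rbarDual hK α π r j l) with hXdef
      have hQ : pplus (max (betaD hK α π r k 0) X) ≤ -(r k (π k 1)) := by
        refine max_le (max_le (hb0 k) (hX k (π k 1))) (by linarith [hr k (π k 1)])
      have hc1 : C1 ≤ pplus C1 := le_max_left _ _
      have hz1 : (0 : ℝ) ≤ pplus C1 := le_max_right _ _
      have hQz : (0 : ℝ) ≤ pplus (max (betaD hK α π r k 0) X) := le_max_right _ _
      rw [le_sub_iff_add_le]
      refine le_min ?_ ?_ <;> linarith
  refine ⟨main, ?_⟩
  rintro d ⟨π, r, hr, hd⟩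
  exact ⟨π, rbarDual hK α π r, (main π r hr).1, (main π r hr).2 hd⟩
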